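/- arXiv:2504.06270 — 2 statements merged into one kernel-verified Lean document; each statement's English description precedes it below -/
import Mathlib

section
/- If z_t = √α_t·z_0 + √c_t·h + √(1-α_t)·ε and z_{t-1} = κ_t·z_t + λ_t·z_0 + ν_t·h + σ_t·ε' with κ_t, λ_t, ν_t as defined, then z_{t-1} = √α_{t-1}·z_0 + √c_{t-1}·h + (κ_t·√(1-α_t)·ε + σ_t·ε'), and the coefficient vector (κ_t·√(1-α_t), σ_t) has Euclidean norm √(1-α_{t-1}). -/
/-! The coefficients `λ` and `ν` are chosen exactly so that the multiples of `z₀` and `h` that `κ`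
picks up from `z_t` are replaced by `√α_{t-1}` and `√c_{t-1}`. For the noise, `κ √(1-α_t)` equals
`√(1-α_{t-1}-σ²)`, so its square and `σ²` add up to `1-α_{t-1}`. -/

theorem reverse_step_combination_eq {R M : Type*} [CommRing R] [AddCommGroup M] [Module R M]
    (z₀ h ε ε' : M) (a a' b b' s κ σ : R) :
    κ • (a • z₀ + b • h + s • ε) + (a' - a * κ) • z₀ + (b' - b * κ) • h + σ • ε'
      = a' • z₀ + b' • h + (κ • s • ε + σ • ε') := by
  module

theorem Real.sqrt_div_mul_sqrt_of_pos {x s : ℝ} (hs : 0 < s) : √(x / s) * √s = √x := by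
  rw [Real.sqrt_div' x hs.le, div_mul_cancel₀ _ (Real.sqrt_ne_zero'.mpr hs)]

theorem Real.sqrt_sq_sqrt_sub_add_sq {r σ : ℝ} (hσ : σ ^ 2 ≤ r) :
    √(√(r - σ ^ 2) ^ 2 + σ ^ 2) = √r := by
  rw [Real.sq_sqrt (sub_nonneg.mpr hσ), sub_add_cancel]

theorem reverse_step_identity_general (d : ℕ) (z₀ h ε ε' : EuclideanSpace ℝ (Fin d))
    (α α' c c' σ : ℝ)
    (hα : α ∈ Set.Ioo (0:ℝ) 1)
    (hσ2 : σ ^ 2 ≤ 1 - α')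
    (κ lam ν : ℝ)
    (hκ : κ = Real.sqrt ((1 - α' - σ ^ 2) / (1 - α)))
    (hlam : lam = Real.sqrt α' - Real.sqrt α * κ)
    (hν : ν = Real.sqrt c' - Real.sqrt c * κ)
    (zt zt' : EuclideanSpace ℝ (Fin d))
    (hzt : zt = Real.sqrt α • z₀ + Real.sqrt c • h + Real.sqrt (1 - α) • ε)
    (hzt' : zt' = κ • zt + lam • z₀ + ν • h + σ • ε') :
    zt' = Real.sqrt α' • z₀ + Real.sqrt c' • h
          + (κ • Real.sqrt (1 - α) • ε + σ • ε') ∧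
    Real.sqrt ((κ * Real.sqrt (1 - α)) ^ 2 + σ ^ 2) = Real.sqrt (1 - α') := by
  have hκ_noise : κ * √(1 - α) = √(1 - α' - σ ^ 2) := by
    rw [hκ, Real.sqrt_div_mul_sqrt_of_pos (sub_pos.mpr hα.2)]
  refine ⟨?_, ?_⟩
  · rw [hzt', hzt, hlam, hν]
    exact reverse_step_combination_eq ..
  · rw [hκ_noise]
    exact Real.sqrt_sq_sqrt_sub_add_sq hσ2

/-- If z_t = √α_t·z_0 + √c_t·h + √(1-α_t)·ε and
z_{t-1} = κ_t·z_t + λ_t·z_0 + ν_t·h + σ_t·ε', then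
z_{t-1} = √α_{t-1}·z_0 + √c_{t-1}·h + (κ_t·√(1-α_t)·ε + σ_t·ε'),
and the coefficient vector (κ_t·√(1-α_t), σ_t) has Euclidean norm √(1-α_{t-1}). -/
theorem reverse_step_identity (d : ℕ) (z₀ h ε ε' : EuclideanSpace ℝ (Fin d))
    (α α' c c' σ : ℝ)
    (hα : α ∈ Set.Ioo (0:ℝ) 1) (hα' : α' ∈ Set.Ioo (0:ℝ) 1)
    (hc : 0 ≤ c) (hc' : 0 ≤ c') (hσ : 0 ≤ σ) (hσ2 : σ ^ 2 ≤ 1 - α')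
    (κ lam ν : ℝ)
    (hκ : κ = Real.sqrt ((1 - α' - σ ^ 2) / (1 - α)))
    (hlam : lam = Real.sqrt α' - Real.sqrt α * κ)
    (hν : ν = Real.sqrt c' - Real.sqrt c * κ)
    (zt zt' : EuclideanSpace ℝ (Fin d))
    (hzt : zt = Real.sqrt α • z₀ + Real.sqrt c • h + Real.sqrt (1 - α) • ε)
    (hzt' : zt' = κ • zt + lam • z₀ + ν • h + σ • ε') :
    zt' = Real.sqrt α' • z₀ + Real.sqrt c' • h
          + (κ • Real.sqrt (1 - α) • ε + σ • ε') ∧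
    Real.sqrt ((κ * Real.sqrt (1 - α)) ^ 2 + σ ^ 2) = Real.sqrt (1 - α') :=
  reverse_step_identity_general d z₀ h ε ε' α α' c c' σ hα hσ2 κ lam ν hκ hlam hν zt zt' hzt hzt'
end

section
/- If X ~ N(√α_t·z_0 + √c_t·h, (1-α_t)I) and conditionally on X = x, Y ~ N(κ_t·x + λ_t·z_0 + ν_t·h, σ_t²I), then the marginal distribution of Y is N(√α_{t-1}·z_0 + √c_{t-1}·h, (1-α_{t-1})I). -/
open MeasureTheory ProbabilityTheory
open scoped NNReal

/-!
Conditionally on `X = x`, `Y` has the law of `κ x + (λ z₀ + ν h) + ξ` with `ξ ~ N(0, σ²)` drawn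
independently of `x`, so the marginal of `Y` is the convolution of the affine image of the law of
`X` with `N(0, σ²)` (this also covers `σ = 0`, where the kernel is a Dirac mass). Means and
variances add, and `κ, λ, ν` are chosen exactly so that the sums are `√α' z₀ + √c' h` and
`κ² (1 - α) + σ² = 1 - α'`.
-/

namespace MeasureTheory.Measure

variable {α M : Type*} [MeasurableSpace α] [AddMonoid M] [MeasurableSpace M] [MeasurableAdd₂ M]
  {f : α → M}

theorem measurable_map_const_add (ν : Measure M) [SFinite ν] (hf : Measurable f) :
    Measurable fun x => ν.map (f x + ·) := by
  refine measurable_of_measurable_coe _ fun s hs => ?_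
  simp_rw [map_apply (measurable_const_add _) hs]
  exact measurable_measure_prodMk_left ((hf.comp measurable_fst).add measurable_snd hs)

theorem bind_map_const_add (μ : Measure α) (ν : Measure M) [SFinite ν] (hf : Measurable f) :
    μ.bind (fun x => ν.map (f x + ·)) = μ.map f ∗ ν := by
  ext s hs
  rw [bind_apply hs (measurable_map_const_add ν hf).aemeasurable, ← lintegral_indicator_one hs,
    lintegral_conv (measurable_one.indicator hs), lintegral_map _ hf]
  · refine lintegral_congr fun x => ?_
    rw [← lintegral_indicator_one hs, lintegral_map (measurable_one.indicator hs)
      (measurable_const_add _)]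
  · exact ((measurable_one.indicator hs).comp measurable_add).lintegral_prod_right'

end MeasureTheory.Measure

namespace ProbabilityTheory

theorem gaussianReal_map_const_mul_add (μ a b : ℝ) (v : ℝ≥0) :
    (gaussianReal μ v).map (fun x => a * x + b)
      = gaussianReal (a * μ + b) (.mk (a ^ 2) (sq_nonneg a) * v) := by
  change (gaussianReal μ v).map ((· + b) ∘ (a * ·)) = _
  rw [← Measure.map_map (measurable_add_const b) (measurable_const_mul a),
    gaussianReal_map_const_mul, gaussianReal_map_add_const]

theorem gaussianReal_bind_gaussianReal_const_mul_add (μ a b : ℝ) (v w : ℝ≥0) :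
    (gaussianReal μ v).bind (fun x => gaussianReal (a * x + b) w)
      = gaussianReal (a * μ + b) (.mk (a ^ 2) (sq_nonneg a) * v + w) := by
  have h_shift (x : ℝ) :
      gaussianReal (a * x + b) w = (gaussianReal 0 w).map ((a * x + b) + ·) := by
    rw [gaussianReal_map_const_add, zero_add]
  simp_rw [h_shift]
  rw [Measure.bind_map_const_add _ _ (by fun_prop), gaussianReal_map_const_mul_add,
    gaussianReal_conv_gaussianReal, add_zero]

end ProbabilityTheory

theorem diffusion_marginal_step_general (z₀ h : ℝ) (α α' c c' σ : ℝ)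
    (hα : α ∈ Set.Ioo (0:ℝ) 1)
    (hσ2 : σ ^ 2 < 1 - α')
    (κ lam ν : ℝ)
    (hκ : κ = Real.sqrt ((1 - α' - σ ^ 2) / (1 - α)))
    (hlam : lam = Real.sqrt α' - Real.sqrt α * κ)
    (hν : ν = Real.sqrt c' - Real.sqrt c * κ) :
    (gaussianReal (Real.sqrt α * z₀ + Real.sqrt c * h) (1 - α).toNNReal).bind
        (fun x => gaussianReal (κ * x + lam * z₀ + ν * h) (σ ^ 2).toNNReal)
      = gaussianReal (Real.sqrt α' * z₀ + Real.sqrt c' * h) (1 - α').toNNReal := by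
  have h_var : κ ^ 2 * (1 - α) + σ ^ 2 = 1 - α' := by
    have : 0 < 1 - α := sub_pos.2 hα.2
    rw [hκ, Real.sq_sqrt (div_nonneg (by linarith) this.le), div_mul_cancel₀ _ this.ne']
    ring
  simp_rw [add_assoc (κ * _)]
  rw [gaussianReal_bind_gaussianReal_const_mul_add]
  congr 1
  · rw [hlam, hν]
    ring
  · rw [← NNReal.coe_inj, NNReal.coe_add, NNReal.coe_mul, NNReal.coe_mk,
      Real.coe_toNNReal _ (sub_nonneg.2 hα.2.le), Real.coe_toNNReal _ (sq_nonneg σ),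
      Real.coe_toNNReal _ ((sq_nonneg σ).trans hσ2.le), h_var]

/-- If X ~ N(√α_t·z_0 + √c_t·h, (1-α_t)) and, conditionally on X = x,
Y ~ N(κ_t·x + λ_t·z_0 + ν_t·h, σ_t²), then the marginal of Y is
N(√α_{t-1}·z_0 + √c_{t-1}·h, (1-α_{t-1})). -/
theorem diffusion_marginal_step (z₀ h : ℝ) (α α' c c' σ : ℝ)
    (hα : α ∈ Set.Ioo (0:ℝ) 1) (hα' : α' ∈ Set.Ioo (0:ℝ) 1)
    (hc : 0 ≤ c) (hc' : 0 ≤ c') (hσ : 0 ≤ σ) (hσ2 : σ ^ 2 < 1 - α')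
    (κ lam ν : ℝ)
    (hκ : κ = Real.sqrt ((1 - α' - σ ^ 2) / (1 - α)))
    (hlam : lam = Real.sqrt α' - Real.sqrt α * κ)
    (hν : ν = Real.sqrt c' - Real.sqrt c * κ) :
    (gaussianReal (Real.sqrt α * z₀ + Real.sqrt c * h) (1 - α).toNNReal).bind
        (fun x => gaussianReal (κ * x + lam * z₀ + ν * h) (σ ^ 2).toNNReal)
      = gaussianReal (Real.sqrt α' * z₀ + Real.sqrt c' * h) (1 - α').toNNReal :=
  diffusion_marginal_step_general z₀ h α α' c c' σ hα hσ2 κ lam ν hκ hlam hν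
end
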